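/- Let $b'$ and $b''$ be coprime positive integers. Then there exist positive integers $c', c''$ with $c'b' - c''b'' = 1$, and for any such $c', c''$, the random variable $\tilde Z = b'(\xi'_1 + \dots + \xi'_{c'}) + b''(\xi''_1 + \dots + \xi''_{c''})$, where $\xi'_1,\dots,\xi'_{c'},\xi''_1,\dots,\xi''_{c''}$ are i.i.d. two-dimensional Rademacher random variables, satisfies $\mathbb{P}(\tilde Z = \mathbf{f}) > 0$ for each $\mathbf{f} \in \{e_1, -e_1, e_2, -e_2\}$. -/

import Mathlib

open MeasureTheory ProbabilityTheory Filter

/-- A random variable `ξ` with values in `ℤ × ℤ` has the two-dimensional Rademacher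
distribution if it takes each of the four values `e₁ = (1,0)`, `e₂ = (0,1)`, `-e₁`, `-e₂`
with equal probability `1/4`. -/
def IsRademacher2D {Ω : Type*} [MeasurableSpace Ω] (μ : Measure Ω) (ξ : Ω → ℤ × ℤ) : Prop :=
  μ {ω | ξ ω = (1, 0)} = 1/4 ∧ μ {ω | ξ ω = (-1, 0)} = 1/4 ∧
  μ {ω | ξ ω = (0, 1)} = 1/4 ∧ μ {ω | ξ ω = (0, -1)} = 1/4

lemma rademacher_meas {Ω : Type*} [MeasurableSpace Ω] {μ : Measure Ω} {ξ : Ω → ℤ × ℤ}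
    (h : IsRademacher2D μ ξ) {f : ℤ × ℤ}
    (hf : f = (1, 0) ∨ f = (-1, 0) ∨ f = (0, 1) ∨ f = (0, -1)) :
    μ {ω | ξ ω = f} = 1/4 ∧ μ {ω | ξ ω = -f} = 1/4 := by
  obtain ⟨h1, h2, h3, h4⟩ := h
  rcases hf with rfl | rfl | rfl | rfl <;>
    simp_all [Prod.neg_mk, show (-(-1) : ℤ) = 1 from rfl]

/-- **Bézout step.** If `b'` and `b''` are coprime positive integers, then there exist
positive integers `c', c''` with `c'b' - c''b'' = 1`; and for any such `c', c''`, the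
random variable `Z̃ = b'(ξ'₁ + ⋯ + ξ'_{c'}) + b''(ξ''₁ + ⋯ + ξ''_{c''})`, built from
i.i.d. two-dimensional Rademacher variables, takes each of the four values
`e₁, -e₁, e₂, -e₂` with positive probability. -/
theorem bezout_step_irreducibility
    (b' b'' : ℕ) (hb' : 0 < b') (hb'' : 0 < b'') (hcop : Nat.Coprime b' b'') :
    (∃ c' c'' : ℕ, 0 < c' ∧ 0 < c'' ∧ (c' : ℤ) * b' - (c'' : ℤ) * b'' = 1) ∧
    ∀ c' c'' : ℕ, 0 < c' → 0 < c'' → (c' : ℤ) * b' - (c'' : ℤ) * b'' = 1 →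
      ∀ (Ω : Type) (_ : MeasurableSpace Ω) (μ : Measure Ω), IsProbabilityMeasure μ →
      ∀ (ξ : Fin c' ⊕ Fin c'' → Ω → ℤ × ℤ), (∀ j, Measurable (ξ j)) →
        iIndepFun ξ μ →
        (∀ j, IsRademacher2D μ (ξ j)) →
      ∀ f : ℤ × ℤ,
        f = (1, 0) ∨ f = (-1, 0) ∨ f = (0, 1) ∨ f = (0, -1) →
        0 < μ {ω | (b' : ℤ) • (∑ k : Fin c', ξ (Sum.inl k) ω) +
                   (b'' : ℤ) • (∑ k : Fin c'', ξ (Sum.inr k) ω) = f} := by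
  constructor
  · -- Bézout
    have hgcd : IsCoprime (b' : ℤ) (b'' : ℤ) := by
      rw [Int.isCoprime_iff_gcd_eq_one]
      exact_mod_cast hcop
    obtain ⟨u, v, huv⟩ := hgcd
    set n : ℤ := |u| + |v| + 1 with hn
    have hc'pos : 0 < u + n * b'' := by
      have : (1 : ℤ) ≤ b'' := by exact_mod_cast hb''
      nlinarith [abs_nonneg u, abs_nonneg v, neg_abs_le u, le_abs_self u]
    have hc''pos : 0 < -v + n * b' := by
      have : (1 : ℤ) ≤ b' := by exact_mod_cast hb'
      nlinarith [abs_nonneg u, abs_nonneg v, neg_abs_le v, le_abs_self v]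
    refine ⟨(u + n * b'').toNat, (-v + n * b').toNat, ?_, ?_, ?_⟩
    · omega
    · omega
    · rw [Int.toNat_of_nonneg hc'pos.le, Int.toNat_of_nonneg hc''pos.le]
      ring_nf
      linarith [huv]
  · intro c' c'' hc' hc'' hbez Ω mΩ μ hμ ξ hmeas hindep hrad f hf
    -- choose the deterministic configuration
    set v : Fin c' ⊕ Fin c'' → ℤ × ℤ := Sum.elim (fun _ => f) (fun _ => -f) with hv
    have hsub : (⋂ j, {ω | ξ j ω = v j}) ⊆
        {ω | (b' : ℤ) • (∑ k : Fin c', ξ (Sum.inl k) ω) +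
             (b'' : ℤ) • (∑ k : Fin c'', ξ (Sum.inr k) ω) = f} := by
      intro ω hω
      simp only [Set.mem_iInter, Set.mem_setOf_eq] at hω ⊢
      have h1 : ∑ k : Fin c', ξ (Sum.inl k) ω = (c' : ℤ) • f := by
        rw [Finset.sum_congr rfl fun k _ => hω (Sum.inl k)]
        simp [hv, Finset.sum_const]
      have h2 : ∑ k : Fin c'', ξ (Sum.inr k) ω = (c'' : ℤ) • (-f) := by
        rw [Finset.sum_congr rfl fun k _ => hω (Sum.inr k)]
        simp [hv, Finset.sum_const]
      rw [h1, h2, smul_smul, smul_smul]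
      rw [smul_neg, ← sub_eq_add_neg, ← sub_smul]
      rw [show (b' : ℤ) * c' - b'' * c'' = 1 by linarith [hbez], one_smul]
    have hmeasint : μ (⋂ j, {ω | ξ j ω = v j}) = ∏ j, μ {ω | ξ j ω = v j} :=
      hindep.meas_iInter fun j => ⟨{v j}, measurableSet_singleton _, rfl⟩
    have hval : ∀ j, μ {ω | ξ j ω = v j} = 1/4 := by
      intro j
      rcases j with k | k
      · exact (rademacher_meas (hrad (Sum.inl k)) hf).1
      · exact (rademacher_meas (hrad (Sum.inr k)) hf).2
    have hpos : 0 < μ (⋂ j, {ω | ξ j ω = v j}) := by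
      rw [hmeasint]
      simp only [hval]
      rw [Finset.prod_const, pos_iff_ne_zero]
      exact pow_ne_zero _ (by norm_num)
    exact hpos.trans_le (μ.mono hsub)
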